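/- arXiv:2105.05668 — 4 statements merged into one kernel-verified Lean document; each statement's English description precedes it below -/
import Mathlib

section
/- For the explicit order-2 VS SDIMSIM with coefficients A(σ) = [[0,0],[1 + 1/(5σ), 0]], Ā(σ) = [[0,0],[2/5, 0]], U(σ) = [[1, 0],[1 − 1/(5σ²), 1/(5σ²)]], and abscissae c = (0,1)^T, the stage order conditions C_μ(σ) = 0 hold for μ = 0, 1, 2 and all σ > 0, where C₀(σ) = e − U(σ)e, C₁(σ) = c − A(σ)e + U(σ)(0, σ)^T, and C₂(σ) = c²/2 − A(σ)c − Ā(σ)e − (1/2)U(σ)(0, σ²)^T. -/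
open Matrix

/-- for the explicit order-2 VS SDIMSIM with the given coefficient
matrices and c = (0,1)ᵀ, the stage order conditions C₀(σ) = C₁(σ) = C₂(σ) = 0
hold for all σ > 0. -/
theorem stmt8 :
    ∀ σ : ℝ, 0 < σ →
    let e : Fin 2 → ℝ := fun _ => 1
    let c : Fin 2 → ℝ := ![0, 1]
    let A : Matrix (Fin 2) (Fin 2) ℝ := !![0, 0; 1 + 1 / (5 * σ), 0]
    let Abar : Matrix (Fin 2) (Fin 2) ℝ := !![0, 0; 2 / 5, 0]
    let U : Matrix (Fin 2) (Fin 2) ℝ :=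
      !![1, 0; 1 - 1 / (5 * σ ^ 2), 1 / (5 * σ ^ 2)]
    (e - U.mulVec e = 0) ∧
    (c - A.mulVec e + U.mulVec ![0, σ] = 0) ∧
    ((fun i => c i ^ 2 / 2) - A.mulVec c - Abar.mulVec e
      - (1 / 2 : ℝ) • U.mulVec ![0, σ ^ 2] = 0) := by
  intro σ hσ e c A Abar U
  have hσ' : σ ≠ 0 := ne_of_gt hσ
  refine ⟨?_, ?_, ?_⟩ <;> funext i <;> fin_cases i <;>
    simp [e, c, A, Abar, U, mulVec, dotProduct, Fin.sum_univ_two, Pi.sub_apply, Pi.add_apply, Pi.smul_apply, smul_eq_mul, Matrix.vecHead, Matrix.vecTail, Function.comp] <;>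
    field_simp <;> ring
end

section
/- For the explicit order-2 VS SDIMSIM with B(σ), B̄(σ), V(σ) given by B(σ) = [[3/4 + (253/4500)σ, 1/4],[−1/4 + (253/4500)σ + (253/900)σ², 1/4 − (253/900)σ²]], B̄(σ) = [[1/8 + (253/6000)σ², 1/8 − (253/3600)σ²],[−1/8 + (3289/18000)σ², −1/8 + (253/3600)σ²]], V(σ) with both rows equal to (4247/4500, 253/4500), and c = (0,1)^T: the output order conditions Ĉ_μ(σ) = 0 hold for μ = 0, 1, 2 and all σ > 0, where Ĉ₀(σ) = (I − V(σ))e, Ĉ₁(σ) = e₁ − B(σ)e + V(σ)(0, σ)^T, and Ĉ₂(σ) = e₁/2 − B(σ)c − B̄(σ)e − (1/2)V(σ)(0, σ²)^T. -/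
open Matrix

/-- for the explicit order-2 VS SDIMSIM with the given B(σ), B̄(σ),
V(σ) and c = (0,1)ᵀ, the output order conditions Ĉ₀(σ) = Ĉ₁(σ) = Ĉ₂(σ) = 0 hold
for all σ > 0. -/
theorem stmt9 :
    ∀ σ : ℝ, 0 < σ →
    let e : Fin 2 → ℝ := fun _ => 1
    let e1 : Fin 2 → ℝ := ![1, 0]
    let c : Fin 2 → ℝ := ![0, 1]
    let B : Matrix (Fin 2) (Fin 2) ℝ :=
      !![3 / 4 + (253 / 4500) * σ, 1 / 4;
         -1 / 4 + (253 / 4500) * σ + (253 / 900) * σ ^ 2,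
         1 / 4 - (253 / 900) * σ ^ 2]
    let Bbar : Matrix (Fin 2) (Fin 2) ℝ :=
      !![1 / 8 + (253 / 6000) * σ ^ 2, 1 / 8 - (253 / 3600) * σ ^ 2;
         -1 / 8 + (3289 / 18000) * σ ^ 2, -1 / 8 + (253 / 3600) * σ ^ 2]
    let V : Matrix (Fin 2) (Fin 2) ℝ :=
      !![4247 / 4500, 253 / 4500; 4247 / 4500, 253 / 4500]
    ((1 - V).mulVec e = 0) ∧
    (e1 - B.mulVec e + V.mulVec ![0, σ] = 0) ∧
    ((1 / 2 : ℝ) • e1 - B.mulVec c - Bbar.mulVec e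
      - (1 / 2 : ℝ) • V.mulVec ![0, σ ^ 2] = 0) := by
  intro σ hσ e e1 c B Bbar V
  refine ⟨?_, ?_, ?_⟩ <;> funext i <;> fin_cases i <;>
    simp [e, e1, c, B, Bbar, V, mulVec, dotProduct, Fin.sum_univ_two,
      Matrix.sub_apply, Matrix.one_apply, Matrix.vecHead, Matrix.vecTail, Function.comp] <;> ring
end

section
/- Suppose a variable stepsize method with stage values z₁(x_{n+1}) = y(x_n + c(σ_n)h_n) and linear-combination quantities z₂(x_n) = Σ_{l=0}^{ρ} β_l y(x_{n-l}) satisfies the order conditions C(σ_n) = A C K + Ā C K² + U β T(σ_n) and β T̂(σ_n) = B C K + B̄ C K² + V β T(σ_n). Then for any sufficiently smooth solution y, the local truncation error satisfies lte(x_{n+1}) = φ_p(σ_n) h_n^{p+1} y^{(p+1)}(x_n) + O(h_n^{p+2}), where φ_p(σ_n) = β T̂_{p+1}(σ_n) − B(σ_n) c(σ_n)^p/p! − B̄(σ_n) c(σ_n)^{p-1}/(p−1)! − V(σ_n) β T_{p+1}(σ_n), with T_{p+1} and T̂_{p+1} the (p+1)-st order Taylor coefficient vectors at the grid offsets. -/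
open Matrix Finset Filter Asymptotics Topology
open scoped ContDiff

private lemma aux_abs_le {t h : ℝ} (ht : t ∈ Set.uIcc 0 h) : |t| ≤ |h| := by
  rcases le_total 0 h with hh | hh
  · rw [Set.uIcc_of_le hh] at ht
    rw [abs_of_nonneg ht.1, abs_of_nonneg hh]; exact ht.2
  · rw [Set.uIcc_of_ge hh] at ht
    rw [abs_of_nonpos ht.2, abs_of_nonpos hh]; exact neg_le_neg ht.1

private lemma peano : ∀ (N : ℕ) (f : ℝ → ℝ), ContDiff ℝ ∞ f →
    (fun u : ℝ => f u - ∑ j ∈ Finset.range (N + 1),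
        iteratedDeriv j f 0 / (Nat.factorial j) * u ^ j)
      =O[𝓝 (0 : ℝ)] fun u : ℝ => u ^ (N + 1) := by
  intro N
  induction N with
  | zero =>
    intro f hf
    have hd := ((contDiff_infty_iff_deriv.mp hf).1 0).hasDerivAt
    have h1 : (fun u : ℝ => f u - f 0) =O[𝓝 (0:ℝ)] fun u : ℝ => u := by
      simpa using hd.isBigO_sub
    simpa using h1
  | succ N IH =>
    intro f hf
    obtain ⟨hdf, hg⟩ := contDiff_infty_iff_deriv.mp hf
    have hIH := IH (deriv f) hg
    set g := deriv f with hgdef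
    set a : ℕ → ℝ := fun j => iteratedDeriv j f 0 / (Nat.factorial j) with ha
    set R : ℝ → ℝ := fun u => f u - ∑ j ∈ Finset.range (N + 1 + 1), a j * u ^ j with hR
    set Q : ℝ → ℝ := fun u => ∑ m ∈ Finset.range (N + 1),
        iteratedDeriv m g 0 / (Nat.factorial m) * u ^ m with hQ
    have hRd : ∀ u : ℝ, HasDerivAt R (g u - Q u) u := by
      intro u
      have h1 : HasDerivAt f (g u) u := (hdf u).hasDerivAt
      have h2 : HasDerivAt (fun u : ℝ => ∑ j ∈ Finset.range (N + 1 + 1), a j * u ^ j)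
          (∑ j ∈ Finset.range (N + 1 + 1), a j * ((j : ℝ) * u ^ (j - 1))) u := by
        apply HasDerivAt.fun_sum
        intro j hj
        exact (hasDerivAt_pow j u).const_mul (a j)
      have h3 : ∑ j ∈ Finset.range (N + 1 + 1), a j * ((j : ℝ) * u ^ (j - 1)) = Q u := by
        rw [Finset.sum_range_succ']
        simp only [Nat.cast_zero, zero_mul, mul_zero, add_zero]
        refine Finset.sum_congr rfl fun m _ => ?_
        have hfac : ((m + 1).factorial : ℝ) = (m + 1) * m.factorial := by
          exact_mod_cast Nat.factorial_succ m
        have hid : iteratedDeriv (m + 1) f 0 = iteratedDeriv m g 0 := by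
          rw [iteratedDeriv_succ']
        simp only [ha, hid, Nat.add_sub_cancel, hfac, Nat.cast_add, Nat.cast_one]
        have hm : (m.factorial : ℝ) ≠ 0 := by positivity
        field_simp
      rw [← h3] at *
      exact h1.sub h2
    obtain ⟨C, hC0, hCw⟩ := hIH.exists_nonneg
    obtain ⟨δ, hδ, hbound⟩ := Metric.eventually_nhds_iff.mp hCw.bound
    rw [isBigO_iff]
    refine ⟨C, ?_⟩
    rw [Metric.eventually_nhds_iff]
    refine ⟨δ, hδ, fun h hh => ?_⟩
    have hR0 : R 0 = 0 := by
      simp only [hR, Finset.sum_range_succ']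
      simp [ha]
    have key : ∀ t ∈ Set.uIcc (0:ℝ) h, ‖g t - Q t‖ ≤ C * |h| ^ (N + 1) := by
      intro t ht
      have hdt : dist t 0 < δ := by
        rw [Real.dist_eq, sub_zero]
        exact lt_of_le_of_lt (aux_abs_le ht) (by rwa [Real.dist_eq, sub_zero] at hh)
      calc ‖g t - Q t‖ ≤ C * ‖t ^ (N + 1)‖ := hbound hdt
        _ ≤ C * |h| ^ (N + 1) := by
            rw [Real.norm_eq_abs, abs_pow]
            exact mul_le_mul_of_nonneg_left
              (pow_le_pow_left₀ (abs_nonneg t) (aux_abs_le ht) _) hC0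
    have hmvt := Convex.norm_image_sub_le_of_norm_hasDerivWithin_le
      (f := R) (f' := fun t => g t - Q t) (s := Set.uIcc (0:ℝ) h)
      (fun t _ => (hRd t).hasDerivWithinAt) key (convex_uIcc 0 h)
      Set.left_mem_uIcc Set.right_mem_uIcc
    rw [hR0, sub_zero, sub_zero] at hmvt
    calc ‖R h‖ ≤ C * |h| ^ (N + 1) * ‖h‖ := hmvt
      _ = C * ‖h ^ (N + 1 + 1)‖ := by
          rw [Real.norm_eq_abs, Real.norm_eq_abs, abs_pow]; ring

private lemma peano_scaled (N : ℕ) (f : ℝ → ℝ) (hf : ContDiff ℝ ∞ f) (x a : ℝ) :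
    (fun h : ℝ => f (x + a * h) - ∑ j ∈ Finset.range (N + 1),
        iteratedDeriv j f x * a ^ j / (Nat.factorial j) * h ^ j)
      =O[𝓝 (0 : ℝ)] fun h : ℝ => h ^ (N + 1) := by
  have hg : ContDiff ℝ ∞ (fun u : ℝ => f (x + a * u)) := by
    have h2 : ContDiff ℝ ∞ (fun u : ℝ => x + a * u) :=
      contDiff_const.add (contDiff_const.mul contDiff_id)
    exact hf.comp h2
  have hder : ∀ j : ℕ, iteratedDeriv j (fun u : ℝ => f (x + a * u)) 0
      = a ^ j * iteratedDeriv j f x := by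
    intro j
    have h2 : ContDiff ℝ (j : ℕ) (fun z : ℝ => f (x + z)) := by
      exact (hf.of_le (show ((j:ℕ) : WithTop ℕ∞) ≤ ∞ by exact_mod_cast le_top)).comp
        ((contDiff_const.add contDiff_id) : ContDiff ℝ (j : ℕ) (fun z : ℝ => x + z))
    calc iteratedDeriv j (fun u : ℝ => f (x + a * u)) 0
        = iteratedDeriv j (fun u : ℝ => (fun z : ℝ => f (x + z)) (a * u)) 0 := rfl
      _ = a ^ j * iteratedDeriv j (fun z : ℝ => f (x + z)) (a * 0) := by
          rw [iteratedDeriv_comp_const_mul h2 a]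
      _ = a ^ j * iteratedDeriv j f x := by
          rw [iteratedDeriv_comp_const_add]
          norm_num
  have h0 := peano N _ hg
  refine h0.congr' (Filter.Eventually.of_forall fun h => ?_) (by rfl)
  simp only [hder]
  congr 1
  exact Finset.sum_congr rfl fun j _ => by ring

private lemma iteratedDeriv_comp_iteratedDeriv (m n : ℕ) (f : ℝ → ℝ) :
    iteratedDeriv m (iteratedDeriv n f) = iteratedDeriv (m + n) f := by
  induction m with
  | zero => simp
  | succ m ih =>
    rw [show m + 1 + n = m + n + 1 by omega, iteratedDeriv_succ, ih, iteratedDeriv_succ]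

private lemma mulK_zero' {r' n : ℕ} (M : Matrix (Fin r') (Fin (n + 1)) ℝ) (k : Fin r')
    (jf : Fin (n + 1)) (h : (jf : ℕ) = 0) :
    (M * Matrix.of fun i j : Fin (n + 1) =>
        if (i : ℕ) + 1 = (j : ℕ) then (1 : ℝ) else 0) k jf = 0 := by
  rw [Matrix.mul_apply]
  apply Finset.sum_eq_zero
  intro b _
  rw [Matrix.of_apply, if_neg (by omega), mul_zero]

private lemma mulK_succ' {r' n : ℕ} (M : Matrix (Fin r') (Fin (n + 1)) ℝ) (k : Fin r')
    (jf : Fin (n + 1)) (j : ℕ) (h : (jf : ℕ) = j + 1) (hj : j < n + 1) :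
    (M * Matrix.of fun i j : Fin (n + 1) =>
        if (i : ℕ) + 1 = (j : ℕ) then (1 : ℝ) else 0) k jf = M k ⟨j, hj⟩ := by
  rw [Matrix.mul_apply]
  rw [Finset.sum_eq_single (⟨j, hj⟩ : Fin (n + 1))]
  · rw [Matrix.of_apply, if_pos (by simp [h]), mul_one]
  · intro b _ hb
    rw [Matrix.of_apply, if_neg, mul_zero]
    intro hc
    exact hb (Fin.ext (show (b:ℕ) = j by omega))
  · simp

private lemma sum_mul_sum_swap {ι : Type*} (t : Finset ι) (b : ι → ℝ) (n : ℕ) (f : ι → ℕ → ℝ) :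
    ∑ i ∈ t, b i * ∑ j ∈ Finset.range n, f i j
      = ∑ j ∈ Finset.range n, ∑ i ∈ t, b i * f i j := by
  simp only [Finset.mul_sum]
  exact Finset.sum_comm

/-- if the VS method with z₁(x_{n+1}) = y(x_n + c(σ)h) and
z₂(x_n) = Σ_l β_l y(x_{n−l}) satisfies the order conditions
C = A C K + Ā C K² + U β T(σ) and β T̂(σ) = B C K + B̄ C K² + V β T(σ),
then for any sufficiently smooth y the local truncation error
lte(x_{n+1}) = z₂(x_{n+1}) − h B y'(x_n + c h) − h² B̄ y''(x_n + c h) − V z₂(x_n)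
satisfies lte = φ_p(σ) h^{p+1} y^{(p+1)}(x_n) + O(h^{p+2}) as h → 0, with
φ_p(σ) = β T̂_{p+1} − B c^p/p! − B̄ c^{p−1}/(p−1)! − V β T_{p+1}.
Here t_l = σ₁ + ⋯ + σ_l (t₀ = 0), x_{n−l} = x_n − t_l h,
x_{n+1−l} = x_n − t_{l−1} h for l ≥ 1 and x_{n+1} = x_n + h. -/
theorem stmt14 (s r p ρ : ℕ) (hp : 1 ≤ p) (σ : ℕ → ℝ) (hσ : ∀ ν, 0 < σ ν)
    (A Abar : Matrix (Fin s) (Fin s) ℝ) (U : Matrix (Fin s) (Fin r) ℝ)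
    (B Bbar : Matrix (Fin r) (Fin s) ℝ) (V : Matrix (Fin r) (Fin r) ℝ)
    (c : Fin s → ℝ) (β : Fin (ρ + 1) → Fin r → ℝ)
    (y : ℝ → ℝ) (hy : ContDiff ℝ (⊤ : ℕ∞) y) (x : ℝ) :
    let tn : ℕ → ℝ := fun l => ∑ ν ∈ Finset.range l, σ ν
    let Cmat : Matrix (Fin s) (Fin (p + 1)) ℝ :=
      Matrix.of fun i j => c i ^ (j : ℕ) / (Nat.factorial (j : ℕ))
    let K : Matrix (Fin (p + 1)) (Fin (p + 1)) ℝ :=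
      Matrix.of fun i j => if (i : ℕ) + 1 = (j : ℕ) then 1 else 0
    let βmat : Matrix (Fin r) (Fin (ρ + 1)) ℝ := Matrix.of fun i l => β l i
    let T : Matrix (Fin (ρ + 1)) (Fin (p + 1)) ℝ :=
      Matrix.of fun l j => (-tn (l : ℕ)) ^ (j : ℕ) / (Nat.factorial (j : ℕ))
    let That : Matrix (Fin (ρ + 1)) (Fin (p + 1)) ℝ :=
      Matrix.of fun l j =>
        if (l : ℕ) = 0 then (1 : ℝ) / (Nat.factorial (j : ℕ))
        else (-tn ((l : ℕ) - 1)) ^ (j : ℕ) / (Nat.factorial (j : ℕ))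
    -- order conditions
    Cmat = A * Cmat * K + Abar * Cmat * K ^ 2 + U * βmat * T →
    βmat * That = B * Cmat * K + Bbar * Cmat * K ^ 2 + V * βmat * T →
    -- local truncation error as a function of the step size h
    let z2next : ℝ → Fin r → ℝ := fun h =>
      ∑ l : Fin (ρ + 1), y (if (l : ℕ) = 0 then x + h else x - tn ((l : ℕ) - 1) * h) • β l
    let z2cur : ℝ → Fin r → ℝ := fun h => ∑ l : Fin (ρ + 1), y (x - tn (l : ℕ) * h) • β l
    let lte : ℝ → Fin r → ℝ := fun h =>
      z2next h
        - h • B.mulVec (fun i => deriv y (x + c i * h))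
        - h ^ 2 • Bbar.mulVec (fun i => iteratedDeriv 2 y (x + c i * h))
        - V.mulVec (z2cur h)
    -- the (p+1)-st Taylor coefficient vectors
    let Tp1 : Fin (ρ + 1) → ℝ := fun l =>
      (-tn (l : ℕ)) ^ (p + 1) / (Nat.factorial (p + 1))
    let Thatp1 : Fin (ρ + 1) → ℝ := fun l =>
      if (l : ℕ) = 0 then (1 : ℝ) / (Nat.factorial (p + 1))
      else (-tn ((l : ℕ) - 1)) ^ (p + 1) / (Nat.factorial (p + 1))
    let φ : Fin r → ℝ :=
      βmat.mulVec Thatp1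
        - B.mulVec (fun i => c i ^ p / (Nat.factorial p))
        - Bbar.mulVec (fun i => c i ^ (p - 1) / (Nat.factorial (p - 1)))
        - V.mulVec (βmat.mulVec Tp1)
    (fun h : ℝ => lte h - h ^ (p + 1) • iteratedDeriv (p + 1) y x • φ)
      =O[𝓝 (0 : ℝ)] fun h : ℝ => h ^ (p + 2) := by
  intro tn Cmat K βmat T That hOC1 hOC2 z2next z2cur lte Tp1 Thatp1 φ
  clear hOC1
  have hy' : ContDiff ℝ ∞ y := hy.of_le (by simp)
  have hyd : ContDiff ℝ ∞ (deriv y) := (contDiff_infty_iff_deriv.mp hy').2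
  have hy2 : ContDiff ℝ ∞ (iteratedDeriv 2 y) := by
    rw [iteratedDeriv_eq_iterate]; exact hy'.iterate_deriv 2
  have hDd : ∀ m : ℕ, iteratedDeriv m (deriv y) x = iteratedDeriv (m + 1) y x :=
    fun m => by rw [iteratedDeriv_succ']
  have hD2 : ∀ m : ℕ, iteratedDeriv m (iteratedDeriv 2 y) x = iteratedDeriv (m + 2) y x :=
    fun m => by rw [iteratedDeriv_comp_iteratedDeriv]
  rw [Asymptotics.isBigO_pi]
  intro k
  simp only [lte, z2next, z2cur, Pi.sub_apply, Pi.smul_apply, smul_eq_mul,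
    Finset.sum_apply, Matrix.mulVec, dotProduct]
  -- abbreviations
  set Ah : Fin (ρ + 1) → ℝ := fun l => if (l : ℕ) = 0 then 1 else -tn ((l : ℕ) - 1) with hAh
  set S1 : Fin (ρ + 1) → ℝ → ℝ := fun l h => ∑ j ∈ Finset.range (p + 1 + 1),
    iteratedDeriv j y x * Ah l ^ j / (Nat.factorial j) * h ^ j with hS1
  set S2 : Fin s → ℝ → ℝ := fun i h => ∑ m ∈ Finset.range (p + 1),
    iteratedDeriv m (deriv y) x * c i ^ m / (Nat.factorial m) * h ^ m with hS2
  set S3 : Fin s → ℝ → ℝ := fun i h => ∑ m ∈ Finset.range (p - 1 + 1),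
    iteratedDeriv m (iteratedDeriv 2 y) x * c i ^ m / (Nat.factorial m) * h ^ m with hS3
  set S4 : Fin (ρ + 1) → ℝ → ℝ := fun l h => ∑ j ∈ Finset.range (p + 1 + 1),
    iteratedDeriv j y x * (-tn (l : ℕ)) ^ j / (Nat.factorial j) * h ^ j with hS4
  -- the big-O building blocks
  have hP1 : ∀ l : Fin (ρ + 1),
      (fun h : ℝ => y (x + Ah l * h) - S1 l h) =O[𝓝 (0:ℝ)] fun h : ℝ => h ^ (p + 2) :=
    fun l => peano_scaled (p + 1) y hy' x (Ah l)
  have hP4 : ∀ l : Fin (ρ + 1),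
      (fun h : ℝ => y (x + (-tn (l : ℕ)) * h) - S4 l h) =O[𝓝 (0:ℝ)] fun h : ℝ => h ^ (p + 2) :=
    fun l => peano_scaled (p + 1) y hy' x (-tn (l : ℕ))
  have hP2 : (fun h : ℝ => h * ∑ i : Fin s, B k i * (deriv y (x + c i * h) - S2 i h))
      =O[𝓝 (0:ℝ)] fun h : ℝ => h ^ (p + 2) := by
    have base : ∀ i : Fin s, (fun h : ℝ => deriv y (x + c i * h) - S2 i h)
        =O[𝓝 (0:ℝ)] fun h : ℝ => h ^ (p + 1) :=
      fun i => peano_scaled p (deriv y) hyd x (c i)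
    have hsum : (fun h : ℝ => ∑ i : Fin s, B k i * (deriv y (x + c i * h) - S2 i h))
        =O[𝓝 (0:ℝ)] fun h : ℝ => h ^ (p + 1) :=
      Asymptotics.IsBigO.fun_sum fun i _ => (base i).const_mul_left _
    have := (isBigO_refl (fun h : ℝ => h) (𝓝 (0:ℝ))).mul hsum
    refine this.congr' (by rfl) (Filter.Eventually.of_forall fun h => ?_)
    show h * h ^ (p + 1) = h ^ (p + 2)
    ring
  have hP3 : (fun h : ℝ => h ^ 2 * ∑ i : Fin s, Bbar k i * (iteratedDeriv 2 y (x + c i * h) - S3 i h))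
      =O[𝓝 (0:ℝ)] fun h : ℝ => h ^ (p + 2) := by
    have base : ∀ i : Fin s, (fun h : ℝ => iteratedDeriv 2 y (x + c i * h) - S3 i h)
        =O[𝓝 (0:ℝ)] fun h : ℝ => h ^ (p - 1 + 1) :=
      fun i => peano_scaled (p - 1) (iteratedDeriv 2 y) hy2 x (c i)
    have hsum : (fun h : ℝ => ∑ i : Fin s, Bbar k i * (iteratedDeriv 2 y (x + c i * h) - S3 i h))
        =O[𝓝 (0:ℝ)] fun h : ℝ => h ^ (p - 1 + 1) :=
      Asymptotics.IsBigO.fun_sum fun i _ => (base i).const_mul_left _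
    have := (isBigO_refl (fun h : ℝ => h ^ 2) (𝓝 (0:ℝ))).mul hsum
    refine this.congr' (by rfl) (Filter.Eventually.of_forall fun h => ?_)
    show h ^ 2 * h ^ (p - 1 + 1) = h ^ (p + 2)
    rw [← pow_add]
    congr 1
    omega
  have hT1 : (fun h : ℝ => ∑ l : Fin (ρ + 1), β l k * (y (x + Ah l * h) - S1 l h))
      =O[𝓝 (0:ℝ)] fun h : ℝ => h ^ (p + 2) :=
    Asymptotics.IsBigO.fun_sum fun l _ => (hP1 l).const_mul_left _
  have hT4 : (fun h : ℝ => ∑ m : Fin r, V k m *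
        ∑ l : Fin (ρ + 1), β l m * (y (x + (-tn (l : ℕ)) * h) - S4 l h))
      =O[𝓝 (0:ℝ)] fun h : ℝ => h ^ (p + 2) :=
    Asymptotics.IsBigO.fun_sum fun m _ =>
      (Asymptotics.IsBigO.fun_sum fun l _ => (hP4 l).const_mul_left (β l m)).const_mul_left (V k m)
  have hG := ((hT1.sub hP2).sub hP3).sub hT4
  refine hG.congr' (Filter.Eventually.of_forall fun h => ?_) (by rfl)
  beta_reduce
  -- coefficient sequences
  set P1 : ℕ → ℝ := fun j => ∑ l : Fin (ρ + 1), β l k * (Ah l ^ j / (Nat.factorial j)) with hP1d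
  set Q2 : ℕ → ℝ := fun m => ∑ i : Fin s, B k i * (c i ^ m / (Nat.factorial m)) with hQ2d
  set Q3 : ℕ → ℝ := fun m => ∑ i : Fin s, Bbar k i * (c i ^ m / (Nat.factorial m)) with hQ3d
  set P4 : ℕ → ℝ := fun j => ∑ m : Fin r, V k m *
    ∑ l : Fin (ρ + 1), β l m * ((-tn (l : ℕ)) ^ j / (Nat.factorial j)) with hP4d
  -- consequences of the order condition
  have hzero : ∀ j, j < p + 1 → P1 j - (if j = 0 then 0 else Q2 (j - 1))
      - (if j < 2 then 0 else Q3 (j - 2)) - P4 j = 0 := by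
    intro j hj
    have hOCj : (βmat * That) k ⟨j, hj⟩ = (B * Cmat * K) k ⟨j, hj⟩
        + ((Bbar * Cmat * K ^ 2 : Matrix (Fin r) (Fin (p + 1)) ℝ)) k ⟨j, hj⟩
        + (V * βmat * T) k ⟨j, hj⟩ := by
      rw [hOC2]; simp [Matrix.add_apply]
    have hL : (βmat * That) k ⟨j, hj⟩ = P1 j := by
      rw [Matrix.mul_apply]
      simp only [hP1d]
      refine Finset.sum_congr rfl fun l _ => ?_
      by_cases hl : (l : ℕ) = 0
      · simp [βmat, That, Matrix.of_apply, hAh, hl, one_pow, (Fin.val_eq_zero_iff.mp hl : l = 0)]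
      · simp [βmat, That, Matrix.of_apply, hAh, hl]
        split_ifs with h0
        · simp [h0] at hl
        · rfl
    have hV : (V * βmat * T) k ⟨j, hj⟩ = P4 j := by
      rw [Matrix.mul_apply]
      simp only [Matrix.mul_apply, hP4d, βmat, T, Matrix.of_apply, Finset.sum_mul,
        Finset.mul_sum]
      rw [Finset.sum_comm]
      exact Finset.sum_congr rfl fun m _ => Finset.sum_congr rfl fun l _ => by ring
    have hB2 : (B * Cmat * K) k ⟨j, hj⟩ = (if j = 0 then 0 else Q2 (j - 1)) := by
      show (B * Cmat * Matrix.of fun i j : Fin (p + 1) =>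
        if (i : ℕ) + 1 = (j : ℕ) then (1 : ℝ) else 0) k ⟨j, hj⟩ = _
      rcases j with _ | j₁
      · rw [if_pos rfl]
        exact mulK_zero' _ _ _ rfl
      · rw [if_neg (Nat.succ_ne_zero _)]
        rw [mulK_succ' (B * Cmat) k _ j₁ rfl (by omega)]
        rw [Matrix.mul_apply]
        simp only [hQ2d, Cmat, Matrix.of_apply, Nat.add_sub_cancel]
    have hBb : ((Bbar * Cmat * K ^ 2 : Matrix (Fin r) (Fin (p + 1)) ℝ)) k ⟨j, hj⟩
        = (if j < 2 then 0 else Q3 (j - 2)) := by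
      have hK2 : (Bbar * Cmat * K ^ 2 : Matrix (Fin r) (Fin (p + 1)) ℝ)
          = ((Bbar * Cmat) * K) * K := by rw [pow_two, ← Matrix.mul_assoc]
      rw [hK2]
      show ((Bbar * Cmat * Matrix.of fun i j : Fin (p + 1) =>
          if (i : ℕ) + 1 = (j : ℕ) then (1 : ℝ) else 0) * Matrix.of fun i j : Fin (p + 1) =>
          if (i : ℕ) + 1 = (j : ℕ) then (1 : ℝ) else 0) k ⟨j, hj⟩ = _
      rcases j with _ | j₁
      · rw [if_pos (by omega)]
        exact mulK_zero' _ _ _ rfl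
      · rcases j₁ with _ | j₂
        · rw [if_pos (by omega)]
          rw [mulK_succ' _ k _ 0 rfl (by omega)]
          exact mulK_zero' _ _ _ rfl
        · rw [if_neg (by omega)]
          rw [mulK_succ' _ k _ (j₂ + 1) rfl (by omega)]
          rw [mulK_succ' _ k _ j₂ rfl (by omega)]
          rw [Matrix.mul_apply]
          simp only [hQ3d, Cmat, Matrix.of_apply, show j₂ + 1 + 1 - 2 = j₂ by omega]
    rw [hL, hB2, hBb, hV] at hOCj
    linarith [hOCj]
  have hφk : φ k = P1 (p + 1) - Q2 p - Q3 (p - 1) - P4 (p + 1) := by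
    have e : ∀ l : Fin (ρ + 1),
        (if (l : ℕ) = 0 then (1:ℝ) / (Nat.factorial (p + 1))
          else (-tn ((l : ℕ) - 1)) ^ (p + 1) / (Nat.factorial (p + 1)))
          = Ah l ^ (p + 1) / (Nat.factorial (p + 1)) := by
      intro l
      by_cases hl : (l : ℕ) = 0
      · simp [hAh, hl, one_pow, (Fin.val_eq_zero_iff.mp hl : l = 0)]
      · simp [hAh, hl]
        split_ifs with h0
        · simp [h0] at hl
        · rfl
    simp only [φ, Thatp1, Tp1, Pi.sub_apply, Matrix.mulVec, dotProduct, βmat,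
      Matrix.of_apply, hP1d, hQ2d, hQ3d, hP4d, e]
  -- interchange identities
  have hA1 : ∑ l : Fin (ρ + 1), β l k * S1 l h
      = ∑ j ∈ Finset.range (p + 1 + 1), iteratedDeriv j y x * h ^ j * P1 j := by
    simp only [hS1, hP1d, Finset.mul_sum]
    rw [Finset.sum_comm]
    exact Finset.sum_congr rfl fun j _ => Finset.sum_congr rfl fun l _ => by ring
  have hA2 : h * ∑ i : Fin s, B k i * S2 i h
      = ∑ m ∈ Finset.range (p + 1), iteratedDeriv (m + 1) y x * h ^ (m + 1) * Q2 m := by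
    simp only [hS2, hDd, hQ2d, Finset.mul_sum]
    rw [Finset.sum_comm]
    exact Finset.sum_congr rfl fun m _ => Finset.sum_congr rfl fun i _ => by ring
  have hA3 : h ^ 2 * ∑ i : Fin s, Bbar k i * S3 i h
      = ∑ m ∈ Finset.range (p - 1 + 1), iteratedDeriv (m + 2) y x * h ^ (m + 2) * Q3 m := by
    simp only [hS3, hD2, hQ3d, Finset.mul_sum]
    rw [Finset.sum_comm]
    exact Finset.sum_congr rfl fun m _ => Finset.sum_congr rfl fun i _ => by ring
  have hA4 : ∑ m : Fin r, V k m * ∑ l : Fin (ρ + 1), β l m * S4 l h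
      = ∑ j ∈ Finset.range (p + 1 + 1), iteratedDeriv j y x * h ^ j * P4 j := by
    simp only [hS4, hP4d, Finset.mul_sum]
    conv_rhs => rw [Finset.sum_comm]
    refine Finset.sum_congr rfl fun m _ => ?_
    rw [Finset.sum_comm]
    exact Finset.sum_congr rfl fun j _ => Finset.sum_congr rfl fun l _ => by ring
  -- reindexed guarded forms
  have hsum2 : ∑ j ∈ Finset.range (p + 1 + 1),
        iteratedDeriv j y x * h ^ j * (if j = 0 then 0 else Q2 (j - 1))
      = ∑ m ∈ Finset.range (p + 1), iteratedDeriv (m + 1) y x * h ^ (m + 1) * Q2 m := by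
    rw [Finset.sum_range_succ']
    simp
  have hsum3 : ∑ j ∈ Finset.range (p + 1 + 1),
        iteratedDeriv j y x * h ^ j * (if j < 2 then 0 else Q3 (j - 2))
      = ∑ m ∈ Finset.range (p - 1 + 1), iteratedDeriv (m + 2) y x * h ^ (m + 2) * Q3 m := by
    rw [Finset.sum_range_succ', Finset.sum_range_succ',
      show p - 1 + 1 = p from Nat.succ_pred_eq_of_pos hp]
    have e2 : ∀ i : ℕ, ¬(i + 1 + 1 < 2) := by omega
    simp [e2, Nat.succ_sub_succ]
  -- the key polynomial identity
  have hkey : ∑ l : Fin (ρ + 1), β l k * S1 l h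
      - h * ∑ i : Fin s, B k i * S2 i h
      - h ^ 2 * ∑ i : Fin s, Bbar k i * S3 i h
      - ∑ m : Fin r, V k m * ∑ l : Fin (ρ + 1), β l m * S4 l h
      = h ^ (p + 1) * (iteratedDeriv (p + 1) y x * φ k) := by
    rw [hA1, hA2, hA3, hA4, ← hsum2, ← hsum3]
    rw [← Finset.sum_sub_distrib, ← Finset.sum_sub_distrib, ← Finset.sum_sub_distrib]
    have factored : ∀ j ∈ Finset.range (p + 1 + 1),
        iteratedDeriv j y x * h ^ j * P1 j
          - iteratedDeriv j y x * h ^ j * (if j = 0 then 0 else Q2 (j - 1))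
          - iteratedDeriv j y x * h ^ j * (if j < 2 then 0 else Q3 (j - 2))
          - iteratedDeriv j y x * h ^ j * P4 j
        = iteratedDeriv j y x * h ^ j * (P1 j - (if j = 0 then 0 else Q2 (j - 1))
            - (if j < 2 then 0 else Q3 (j - 2)) - P4 j) := fun j _ => by ring
    rw [Finset.sum_congr rfl factored, Finset.sum_range_succ, Finset.sum_eq_zero, zero_add]
    · rw [if_neg (by omega), if_neg (by omega), hφk,
        show p + 1 - 1 = p by omega, show p + 1 - 2 = p - 1 by omega]
      ring
    · intro j hj
      rw [hzero j (Finset.mem_range.mp hj), mul_zero]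
  -- pointwise identification with the goal
  have e1 : ∑ l : Fin (ρ + 1),
        y (if (l : ℕ) = 0 then x + h else x - tn ((l : ℕ) - 1) * h) * β l k
      = ∑ l : Fin (ρ + 1), β l k * y (x + Ah l * h) := by
    refine Finset.sum_congr rfl fun l _ => ?_
    by_cases hl : (l : ℕ) = 0
    · simp only [hAh, hl, if_pos, one_mul, if_true]
      exact mul_comm _ _
    · simp only [hAh, hl, if_false, if_neg hl]
      rw [show x + -tn ((l : ℕ) - 1) * h = x - tn ((l : ℕ) - 1) * h by ring]
      exact mul_comm _ _
  have e4 : ∑ m : Fin r, V k m * ∑ l : Fin (ρ + 1), y (x - tn (l : ℕ) * h) * β l m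
      = ∑ m : Fin r, V k m * ∑ l : Fin (ρ + 1), β l m * y (x + -tn (l : ℕ) * h) := by
    refine Finset.sum_congr rfl fun m _ => ?_
    refine congrArg _ (Finset.sum_congr rfl fun l _ => ?_)
    rw [show x + -tn (l : ℕ) * h = x - tn (l : ℕ) * h by ring]
    exact mul_comm _ _
  rw [e1, e4]
  simp only [mul_sub, Finset.sum_sub_distrib]
  linear_combination -hkey
end

section
/- For the order-2 method coefficients at σ = 1 (fixed stepsize), the characteristic polynomial p(w, z) = det(wI − M(z; 1)) of the stability matrix M(z;1) = V + (zB + z²B̄)(I − zA − z²Ā)^{-1}U factors as w(w − R(z)) for some rational function R(z); equivalently, p₀(z) := det M(z;1) is identically zero, i.e. the method is Runge–Kutta stable at σ = 1. -/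
open Matrix Polynomial

/-- for the order-2 method coefficients at σ = 1, the stability
matrix M(z) = V + (zB + z²B̄)(I − zA − z²Ā)⁻¹U has det M(z) = 0 wherever the
inverse exists, so its characteristic polynomial factors as w(w − R(z)) with
R(z) = trace M(z) (Runge–Kutta stability at σ = 1). -/
theorem stmt16 :
    let A : Matrix (Fin 2) (Fin 2) ℝ := !![0, 0; 6 / 5, 0]
    let Abar : Matrix (Fin 2) (Fin 2) ℝ := !![0, 0; 2 / 5, 0]
    let U : Matrix (Fin 2) (Fin 2) ℝ := !![1, 0; 4 / 5, 1 / 5]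
    let B : Matrix (Fin 2) (Fin 2) ℝ :=
      !![3 / 4 + 253 / 4500, 1 / 4;
         -1 / 4 + 253 / 4500 + 253 / 900, 1 / 4 - 253 / 900]
    let Bbar : Matrix (Fin 2) (Fin 2) ℝ :=
      !![1 / 8 + 253 / 6000, 1 / 8 - 253 / 3600;
         -1 / 8 + 3289 / 18000, -1 / 8 + 253 / 3600]
    let V : Matrix (Fin 2) (Fin 2) ℝ :=
      !![4247 / 4500, 253 / 4500; 4247 / 4500, 253 / 4500]
    ∀ z : ℝ, IsUnit (1 - z • A - z ^ 2 • Abar).det →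
      let M : Matrix (Fin 2) (Fin 2) ℝ :=
        V + (z • B + z ^ 2 • Bbar) * (1 - z • A - z ^ 2 • Abar)⁻¹ * U
      M.det = 0 ∧ M.charpoly = X * (X - C M.trace) := by
  intro A Abar U B Bbar V z _ M
  have hinv : (1 - z • A - z ^ 2 • Abar)⁻¹ =
      !![1, 0; 6 / 5 * z + 2 / 5 * z ^ 2, 1] := by
    apply Matrix.inv_eq_right_inv
    show (1 - z • A - z ^ 2 • Abar) * _ = 1
    have h1 : (1 : Matrix (Fin 2) (Fin 2) ℝ) = !![1, 0; 0, 1] := by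
      ext i j; fin_cases i <;> fin_cases j <;> simp
    rw [h1]
    simp only [A, Abar, Matrix.smul_of, Matrix.smul_cons, smul_eq_mul, Matrix.smul_empty]
    ext i j
    fin_cases i <;> fin_cases j <;>
      simp [Matrix.mul_apply, Fin.sum_univ_succ] <;> ring
  have hdet : M.det = 0 := by
    simp only [M, hinv, V, B, Bbar, U]
    rw [Matrix.det_fin_two]
    simp [Matrix.mul_apply, Fin.sum_univ_succ, Matrix.add_apply]
    ring
  refine ⟨hdet, ?_⟩
  have h2 : M 0 0 * M 1 1 - M 0 1 * M 1 0 = 0 := by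
    rw [← Matrix.det_fin_two]; exact hdet
  have h3 := congrArg (C : ℝ → ℝ[X]) h2
  simp only [map_sub, map_zero, C_mul] at h3
  rw [Matrix.charpoly, Matrix.det_fin_two, Matrix.trace_fin_two]
  simp only [Matrix.charmatrix_apply_eq, Matrix.charmatrix_apply_ne,
    Fin.zero_eq_one_iff, Fin.one_eq_zero_iff, ne_eq, OfNat.ofNat_ne_one,
    not_false_eq_true, one_ne_zero]
  rw [C_add]
  linear_combination h3
end
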